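/- arXiv:2511.02139 — 4 statements merged into one kernel-verified Lean document; each statement's English description precedes it below -/
import Mathlib

section
/- For weights w, v on Ω, the operator norm of the maximal operator M from L^∞_{w^{-1}}(Ω) to L^∞_{v^{-1}}(Ω) equals ‖Mw‖_{L^∞_{v^{-1}}(Ω)}, which in turn equals the weight characteristic [w,v]_{(1,∞)}. -/
open MeasureTheory ENNReal

noncomputable def eNorm {Ω : Type*} [MeasurableSpace Ω] (f : Ω → ℝ≥0∞) (s : ℝ≥0∞)
    (μ : Measure Ω) : ℝ≥0∞ :=
  if s = ∞ then essSup f μ else (∫⁻ x, f x ^ s.toReal ∂μ) ^ s.toReal⁻¹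

noncomputable def wChar {Ω : Type*} [MeasurableSpace Ω] (μ : Measure Ω) (𝒰 : Set (Set Ω))
    (w v : Ω → ℝ≥0∞) (s r : ℝ≥0∞) : ℝ≥0∞ :=
  ⨆ U ∈ 𝒰, (μ U) ^ (-(s⁻¹ + r⁻¹).toReal) * eNorm w s (μ.restrict U)
    * eNorm (fun x => (v x)⁻¹) r (μ.restrict U)

noncomputable def maxOp {Ω : Type*} [MeasurableSpace Ω] (μ : Measure Ω) (𝒰 : Set (Set Ω))
    (f : Ω → ℝ≥0∞) (x : Ω) : ℝ≥0∞ :=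
  ⨆ U ∈ 𝒰, ((μ U)⁻¹ * ∫⁻ y in U, f y ∂μ) * Set.indicator U (fun _ => (1 : ℝ≥0∞)) x

def IsBasis {Ω : Type*} [MeasurableSpace Ω] (μ : Measure Ω) (𝒰 : Set (Set Ω)) : Prop :=
  𝒰.Countable ∧ (∀ U ∈ 𝒰, MeasurableSet U ∧ 0 < μ U ∧ μ U < ∞) ∧
    (⋃ U ∈ 𝒰, U) = Set.univ ∧ ∀ x y : Ω, ∃ U ∈ 𝒰, x ∈ U ∧ y ∈ U

def IsWeight {Ω : Type*} [MeasurableSpace Ω] (w : Ω → ℝ≥0∞) : Prop :=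
  Measurable w ∧ ∀ x, 0 < w x ∧ w x < ∞

lemma essSup_iSup_count {ι Ω : Type*} [Countable ι] [MeasurableSpace Ω] (μ : Measure Ω)
    (g : ι → Ω → ℝ≥0∞) :
    essSup (fun x => ⨆ i, g i x) μ = ⨆ i, essSup (g i) μ := by
  apply le_antisymm
  · refine essSup_le_of_ae_le _ ?_
    have h : ∀ᵐ x ∂μ, ∀ i, g i x ≤ essSup (g i) μ :=
      ae_all_iff.2 fun i => ENNReal.ae_le_essSup (g i)
    filter_upwards [h] with x hx
    exact iSup_le fun i => (hx i).trans (le_iSup (fun j => essSup (g j) μ) i)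
  · exact iSup_le fun i =>
      essSup_mono_ae (Filter.Eventually.of_forall fun x => le_iSup (fun j => g j x) i)

/-- the operator norm of `M : L^∞_{w⁻¹} → L^∞_{v⁻¹}` equals
`‖Mw‖_{L^∞_{v⁻¹}}`, which equals `[w,v]_{(1,∞)}`. -/
theorem maximal_op_norm_infty {Ω : Type*} [MeasurableSpace Ω] (μ : Measure Ω) [SigmaFinite μ]
    (𝒰 : Set (Set Ω)) (h𝒰 : IsBasis μ 𝒰) (w v : Ω → ℝ≥0∞)
    (hw : IsWeight w) (hv : IsWeight v) :
    (⨆ (f : Ω → ℝ≥0∞) (_ : Measurable f)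
        (_ : eNorm (fun x => f x * (w x)⁻¹) ∞ μ ≤ 1),
        eNorm (fun x => maxOp μ 𝒰 f x * (v x)⁻¹) ∞ μ)
      = eNorm (fun x => maxOp μ 𝒰 w x * (v x)⁻¹) ∞ μ ∧
    eNorm (fun x => maxOp μ 𝒰 w x * (v x)⁻¹) ∞ μ = wChar μ 𝒰 w v 1 ∞ := by
  have hw0 : ∀ x, w x ≠ 0 := fun x => (hw.2 x).1.ne'
  have hwt : ∀ x, w x ≠ ∞ := fun x => (hw.2 x).2.ne
  constructor
  · apply le_antisymm
    · refine iSup_le fun f => iSup_le fun hf => iSup_le fun hb => ?_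
      simp only [eNorm, if_pos rfl] at hb ⊢
      have hfw : ∀ᵐ x ∂μ, f x ≤ w x := by
        filter_upwards [ENNReal.ae_le_essSup (fun x => f x * (w x)⁻¹)] with x hx
        have h1 : f x * (w x)⁻¹ ≤ 1 := hx.trans hb
        calc f x = f x * ((w x)⁻¹ * w x) := by
              rw [ENNReal.inv_mul_cancel (hw0 x) (hwt x), mul_one]
          _ = f x * (w x)⁻¹ * w x := by rw [mul_assoc]
          _ ≤ 1 * w x := mul_le_mul_left h1 _
          _ = w x := one_mul _
      refine essSup_mono_ae (Filter.Eventually.of_forall fun x => ?_)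
      refine mul_le_mul_left ?_ _
      refine iSup_mono fun U => iSup_mono fun hU => ?_
      refine mul_le_mul_left (mul_le_mul_right ?_ _) _
      exact lintegral_mono_ae (ae_restrict_of_ae hfw)
    · refine le_iSup_of_le w <| le_iSup_of_le hw.1 <| le_iSup_of_le ?_ le_rfl
      simp only [eNorm, if_pos rfl]
      refine essSup_le_of_ae_le _ (Filter.Eventually.of_forall fun x => ?_)
      show w x * (w x)⁻¹ ≤ 1
      rw [ENNReal.mul_inv_cancel (hw0 x) (hwt x)]
  · have hcount : Countable ↥𝒰 := h𝒰.1.to_subtype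
    have hpt : ∀ x, maxOp μ 𝒰 w x * (v x)⁻¹
        = ⨆ U : 𝒰, ((μ U.1)⁻¹ * ∫⁻ y in U.1, w y ∂μ)
            * Set.indicator U.1 (fun y => (v y)⁻¹) x := by
      intro x
      rw [maxOp, iSup_subtype', ENNReal.iSup_mul]
      refine iSup_congr fun U => ?_
      by_cases hx : x ∈ U.1
      · simp [Set.indicator_of_mem hx, mul_assoc]
      · simp [Set.indicator_of_notMem hx]
    simp only [eNorm, if_pos rfl, wChar, iSup_subtype']
    calc essSup (fun x => maxOp μ 𝒰 w x * (v x)⁻¹) μ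
        = essSup (fun x => ⨆ U : 𝒰, ((μ U.1)⁻¹ * ∫⁻ y in U.1, w y ∂μ)
            * Set.indicator U.1 (fun y => (v y)⁻¹) x) μ := by
          exact essSup_congr_ae (Filter.Eventually.of_forall hpt)
      _ = ⨆ U : 𝒰, essSup (fun x => ((μ U.1)⁻¹ * ∫⁻ y in U.1, w y ∂μ)
            * Set.indicator U.1 (fun y => (v y)⁻¹) x) μ := essSup_iSup_count μ _
      _ = ⨆ U : 𝒰, μ U.1 ^ (-((1:ℝ≥0∞)⁻¹ + (∞:ℝ≥0∞)⁻¹).toReal)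
            * eNorm w 1 (μ.restrict U.1) * eNorm (fun x => (v x)⁻¹) ∞ (μ.restrict U.1) := by
          refine iSup_congr fun U => ?_
          rw [ENNReal.essSup_const_mul,
            ENNReal.essSup_indicator_eq_essSup_restrict (h𝒰.2.1 U.1 U.2).1]
          simp [eNorm, mul_assoc, ENNReal.rpow_neg_one]
end

section
/- For weights w, v on Ω, [w,v]_{(∞,1)} = ‖M(v^{-1})‖_{L^∞_w(Ω)} = ‖M‖_{L^∞_v(Ω) → L^∞_w(Ω)}. -/
open MeasureTheory ENNReal

/-! Since `𝒰` is countable, the essential supremum of `M f · w` can be taken term by term over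
`U ∈ 𝒰`, giving `‖M f · w‖_∞ = sup_U (avg_U f) · ‖w‖_{L^∞(U)}`; for `f = v⁻¹` this is `[w,v]_{(∞,1)}`.
An `f` with `‖f v‖_∞ ≤ 1` satisfies `f ≤ v⁻¹` a.e., so `M f ≤ M (v⁻¹)`, and `v⁻¹` itself qualifies:
the operator norm is attained at `f = v⁻¹`. -/

theorem ENNReal.essSup_biSup {ι α : Type*} [MeasurableSpace α] {μ : Measure α} {s : Set ι}
    (hs : s.Countable) (f : ι → α → ℝ≥0∞) :
    essSup (fun x => ⨆ i ∈ s, f i x) μ = ⨆ i ∈ s, essSup (f i) μ := by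
  refine le_antisymm (essSup_le_of_ae_le _ ?_) (iSup₂_le fun i hi => ?_)
  · filter_upwards [(ae_ball_iff hs).2 fun i _ => ENNReal.ae_le_essSup (f i)] with x hx
    exact iSup₂_mono hx
  · exact essSup_mono_ae (.of_forall fun x => le_iSup₂ (f := fun i (_ : i ∈ s) => f i x) i hi)

theorem ae_le_inv_of_essSup_mul_le_one {α : Type*} [MeasurableSpace α] {μ : Measure α}
    {f v : α → ℝ≥0∞} (h : essSup (fun x => f x * v x) μ ≤ 1) : ∀ᵐ x ∂μ, f x ≤ (v x)⁻¹ := by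
  filter_upwards [ENNReal.ae_le_essSup (fun x => f x * v x)] with x hx
  exact ENNReal.le_inv_iff_mul_le.2 (hx.trans h)

section MaximalOperator

variable {Ω : Type*} [MeasurableSpace Ω] (μ : Measure Ω) (𝒰 : Set (Set Ω))

theorem maxOp_mul_eq_biSup (f w : Ω → ℝ≥0∞) (x : Ω) :
    maxOp μ 𝒰 f x * w x = ⨆ U ∈ 𝒰, ((μ U)⁻¹ * ∫⁻ y in U, f y ∂μ) * U.indicator w x := by
  simp only [maxOp, ENNReal.iSup_mul, mul_assoc]
  congr! 4 with U
  by_cases hx : x ∈ U <;> simp [hx]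

theorem essSup_maxOp_mul (hcnt : 𝒰.Countable) (hmeas : ∀ U ∈ 𝒰, MeasurableSet U)
    (f w : Ω → ℝ≥0∞) :
    essSup (fun x => maxOp μ 𝒰 f x * w x) μ
      = ⨆ U ∈ 𝒰, ((μ U)⁻¹ * ∫⁻ y in U, f y ∂μ) * essSup w (μ.restrict U) := by
  simp only [maxOp_mul_eq_biSup, ENNReal.essSup_biSup hcnt, ENNReal.essSup_const_mul]
  refine iSup_congr fun U => iSup_congr fun hU => ?_
  rw [ENNReal.essSup_indicator_eq_essSup_restrict (hmeas U hU)]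

theorem maxOp_mono_ae {f g : Ω → ℝ≥0∞} (h : ∀ᵐ x ∂μ, f x ≤ g x) (x : Ω) :
    maxOp μ 𝒰 f x ≤ maxOp μ 𝒰 g x :=
  iSup₂_mono fun _ _ => mul_le_mul_left (mul_le_mul_right (lintegral_mono_ae
    (ae_restrict_of_ae h)) _) _

theorem wChar_top_one (w v : Ω → ℝ≥0∞) :
    wChar μ 𝒰 w v ∞ 1
      = ⨆ U ∈ 𝒰, ((μ U)⁻¹ * ∫⁻ y in U, (v y)⁻¹ ∂μ) * essSup w (μ.restrict U) := by
  simp only [wChar, eNorm, if_pos, one_ne_top, if_false, inv_top, inv_one, zero_add, toReal_one,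
    rpow_one, rpow_neg_one]
  refine iSup_congr fun U => iSup_congr fun _ => ?_
  ring

end MaximalOperator

theorem weight_char_infty_one_general {Ω : Type*} [MeasurableSpace Ω] (μ : Measure Ω)
    (𝒰 : Set (Set Ω)) (h𝒰 : IsBasis μ 𝒰) (w v : Ω → ℝ≥0∞)
    (hv : IsWeight v) :
    wChar μ 𝒰 w v ∞ 1 = eNorm (fun x => maxOp μ 𝒰 (fun y => (v y)⁻¹) x * w x) ∞ μ ∧
    eNorm (fun x => maxOp μ 𝒰 (fun y => (v y)⁻¹) x * w x) ∞ μ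
      = (⨆ (f : Ω → ℝ≥0∞) (_ : Measurable f)
          (_ : eNorm (fun x => f x * v x) ∞ μ ≤ 1),
          eNorm (fun x => maxOp μ 𝒰 f x * w x) ∞ μ) := by
  obtain ⟨hcnt, hmem, -, -⟩ := h𝒰
  simp only [eNorm, if_pos]
  refine ⟨?_, le_antisymm ?_ ?_⟩
  · rw [wChar_top_one, essSup_maxOp_mul μ 𝒰 hcnt fun U hU => (hmem U hU).1]
  · have hadm : essSup (fun x => (v x)⁻¹ * v x) μ ≤ 1 :=
      essSup_le_of_ae_le _ (.of_forall fun x => ENNReal.inv_mul_le_one (v x))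
    exact le_iSup₂_of_le (fun y => (v y)⁻¹) hv.1.inv (le_iSup_of_le hadm le_rfl)
  · refine iSup₂_le fun f _ => iSup_le fun hf => essSup_mono_ae (.of_forall fun x => ?_)
    exact mul_le_mul_left (maxOp_mono_ae μ 𝒰 (ae_le_inv_of_essSup_mul_le_one hf) x) _

/-- `[w,v]_{(∞,1)} = ‖M(v⁻¹)‖_{L^∞_w} = ‖M‖_{L^∞_v → L^∞_w}`. -/
theorem weight_char_infty_one {Ω : Type*} [MeasurableSpace Ω] (μ : Measure Ω) [SigmaFinite μ]
    (𝒰 : Set (Set Ω)) (h𝒰 : IsBasis μ 𝒰) (w v : Ω → ℝ≥0∞)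
    (hw : IsWeight w) (hv : IsWeight v) :
    wChar μ 𝒰 w v ∞ 1 = eNorm (fun x => maxOp μ 𝒰 (fun y => (v y)⁻¹) x * w x) ∞ μ ∧
    eNorm (fun x => maxOp μ 𝒰 (fun y => (v y)⁻¹) x * w x) ∞ μ
      = (⨆ (f : Ω → ℝ≥0∞) (_ : Measurable f)
          (_ : eNorm (fun x => f x * v x) ∞ μ ≤ 1),
          eNorm (fun x => maxOp μ 𝒰 f x * w x) ∞ μ) :=
  weight_char_infty_one_general μ 𝒰 h𝒰 w v hv
end

section
/- In the setting of the extrapolation lemma (upward case γ ∈ (0,∞), α = 1, s = t ∈ [1,∞), r = s', s₀ = t₀ ∈ [1,∞], r₀ = s₀'): given f ∈ L^p_v(Ω) nonzero, define H by H^s w^s = |f|^p v^p. Then on {|f| > 0} the weight v₀ := (H w v^{-1})^{−s/γ} v^{s/s₀} satisfies |f| v₀ ≤ (|f| v)^{p/p₀}, and consequently ‖f v₀‖_{L^{p₀}} ≤ ‖f v‖_{L^p}^{p/p₀}, where 1/p − 1/p₀ = 1/γ. -/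
open MeasureTheory ENNReal

/-! From `H^s w^s = (f v)^p` one gets `(H w)^{-s/γ} = (f v)^{-p/γ}`, and the exponent relation
`1/s - 1/s₀ = 1/γ` makes the powers of `v` in `f v₀` collapse to `v^1`; hence
`f v₀ = (f v)^{1 - p/γ} = (f v)^{p/p₀}` wherever `f > 0`. Where `f = 0` the left side vanishes (as
`0 · ∞ = 0`), and integrating the pointwise bound to the power `p₀` gives the norm inequality. -/

theorem ENNReal.mul_inv_rpow_of_ne_zero_of_ne_top (x : ℝ≥0∞) {y : ℝ≥0∞} (hy₀ : y ≠ 0)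
    (hy : y ≠ ∞) (z : ℝ) : (x * y⁻¹) ^ z = x ^ z * y ^ (-z) := by
  simp [mul_rpow_eq_ite, hy₀, hy, inv_rpow, rpow_neg]

theorem mul_extrapolated_weight_eq {f v h : ℝ≥0∞} {γ s σ₀ p π₀ : ℝ} (hs : s ≠ 0) (hp : p ≠ 0)
    (hsγ : 1 / s - σ₀ = 1 / γ) (hpγ : 1 / p - π₀ = 1 / γ) (hf₀ : f ≠ 0) (hf : f ≠ ∞)
    (hv₀ : v ≠ 0) (hv : v ≠ ∞) (hh : h ^ s = (f * v) ^ p) :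
    f * ((h * v⁻¹) ^ (-(s / γ)) * v ^ (s * σ₀)) = (f * v) ^ (p * π₀) := by
  have hv_exp : s / γ + s * σ₀ = 1 := by
    rw [show σ₀ = 1 / s - 1 / γ by linarith, mul_sub, mul_one_div_cancel hs]; ring
  have hfv_exp : 1 + -(p / γ) = p * π₀ := by
    rw [show π₀ = 1 / p - 1 / γ by linarith, mul_sub, mul_one_div_cancel hp]; ring
  have hh_pow : h ^ (-(s / γ)) = (f * v) ^ (-(p / γ)) := by
    rw [show -(s / γ) = s * -γ⁻¹ by ring, rpow_mul, hh, ← rpow_mul]; ring_nf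
  have hfv₀ : f * v ≠ 0 := mul_ne_zero hf₀ hv₀
  have hfv : f * v ≠ ∞ := mul_ne_top hf hv
  calc f * ((h * v⁻¹) ^ (-(s / γ)) * v ^ (s * σ₀))
      = f * ((f * v) ^ (-(p / γ)) * v ^ (s / γ) * v ^ (s * σ₀)) := by
        rw [mul_inv_rpow_of_ne_zero_of_ne_top _ hv₀ hv, neg_neg, hh_pow]
    _ = (f * v) ^ (1 : ℝ) * (f * v) ^ (-(p / γ)) := by
        rw [mul_assoc _ (v ^ (s / γ)), ← rpow_add _ _ hv₀ hv, hv_exp, rpow_one, rpow_one]; ring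
    _ = (f * v) ^ (p * π₀) := by rw [← rpow_add _ _ hfv₀ hfv, hfv_exp]

theorem eNorm_le_rpow_of_le_rpow {Ω : Type*} [MeasurableSpace Ω] {μ : Measure Ω}
    {F G : Ω → ℝ≥0∞} {p π : ℝ} (hp : 0 < p) (hπ : 0 ≤ π)
    (hFG : F ≤ᵐ[μ] fun x => G x ^ (p * π)) :
    eNorm F (ENNReal.ofReal π)⁻¹ μ ≤ eNorm G (ENNReal.ofReal p) μ ^ (p * π) := by
  rcases hπ.eq_or_lt with rfl | hπ
  · simp only [mul_zero, rpow_zero] at hFG ⊢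
    simpa [eNorm] using essSup_le_of_ae_le 1 hFG
  have hπ_inv : (ENNReal.ofReal π)⁻¹ ≠ ∞ := by simpa using hπ
  have hπ_toReal : ((ENNReal.ofReal π)⁻¹).toReal = π⁻¹ := by
    rw [toReal_inv, toReal_ofReal hπ.le]
  simp only [eNorm, if_neg hπ_inv, if_neg ofReal_ne_top, hπ_toReal, toReal_ofReal hp.le, inv_inv,
    ← rpow_mul, inv_mul_cancel_left₀ hp.ne']
  gcongr ?_ ^ _
  refine lintegral_mono_ae (hFG.mono fun x hx => ?_)
  calc F x ^ π⁻¹ ≤ (G x ^ (p * π)) ^ π⁻¹ := by gcongr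
    _ = G x ^ p := by rw [← rpow_mul, mul_inv_cancel_right₀ hπ.ne']

/-- Here `σ₀ = 1/s₀` and `π₀ = 1/p₀`, with `σ₀ = 0`, `π₀ = 0` encoding `s₀ = ∞`, `p₀ = ∞`; the
target exponent is `p₀ = (ofReal π₀)⁻¹`. -/
theorem pointwise_extrapolation_step_general {Ω : Type*} [MeasurableSpace Ω] (μ : Measure Ω)
    (γ s σ₀ p π₀ : ℝ) (hs : 1 ≤ s)
    (hsγ : 1 / s - σ₀ = 1 / γ)
    (hp : 0 < p) (hπ₀ : 0 ≤ π₀) (hpγ : 1 / p - π₀ = 1 / γ)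
    (w v : Ω → ℝ≥0∞) (hv : IsWeight v)
    (f H : Ω → ℝ≥0∞) (hfne : ∀ x, f x ≠ ∞)
    (hH : ∀ x, H x ^ s * w x ^ s = f x ^ p * v x ^ p) :
    (∀ x, 0 < f x →
      f x * ((H x * w x * (v x)⁻¹) ^ (-(s / γ)) * v x ^ (s * σ₀))
        ≤ (f x * v x) ^ (p * π₀)) ∧
    eNorm (fun x => f x * ((H x * w x * (v x)⁻¹) ^ (-(s / γ)) * v x ^ (s * σ₀)))
        (ENNReal.ofReal π₀)⁻¹ μ
      ≤ (eNorm (fun x => f x * v x) (ENNReal.ofReal p) μ) ^ (p * π₀) := by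
  have hs₀ : (0 : ℝ) < s := zero_lt_one.trans_le hs
  have hpos : ∀ x, 0 < f x →
      f x * ((H x * w x * (v x)⁻¹) ^ (-(s / γ)) * v x ^ (s * σ₀)) = (f x * v x) ^ (p * π₀) :=
    fun x hfx => mul_extrapolated_weight_eq hs₀.ne' hp.ne' hsγ hpγ hfx.ne' (hfne x)
      (hv.2 x).1.ne' (hv.2 x).2.ne <| by
        rw [mul_rpow_of_nonneg _ _ hs₀.le, hH, mul_rpow_of_nonneg _ _ hp.le]
  refine ⟨fun x hfx => (hpos x hfx).le, eNorm_le_rpow_of_le_rpow hp hπ₀ (ae_of_all _ fun x => ?_)⟩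
  rcases eq_zero_or_pos (f x) with hfx | hfx
  · simp [hfx]
  · exact (hpos x hfx).le

/-- pointwise step of the extrapolation lemma. Here `σ₀ = 1/s₀ ∈ [0,1]`
(so `σ₀ = 0` corresponds to `s₀ = ∞`), `π₀ = 1/p₀ ∈ [0,∞)` (so the target exponent is
`p₀ = (ofReal π₀)⁻¹`, with `π₀ = 0` giving `p₀ = ∞`), `1/s - σ₀ = 1/p - π₀ = 1/γ`,
`H` is defined by `H^s w^s = f^p v^p`, and
`v₀ = (Hwv⁻¹)^{-s/γ} v^{s/s₀}` satisfies `f·v₀ ≤ (f·v)^{p/p₀}` on `{f > 0}`,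
whence `‖f v₀‖_{L^{p₀}} ≤ ‖f v‖_{L^p}^{p/p₀}`. -/
theorem pointwise_extrapolation_step {Ω : Type*} [MeasurableSpace Ω] (μ : Measure Ω)
    [SigmaFinite μ] (γ s σ₀ p π₀ : ℝ) (hγ : 0 < γ) (hs : 1 ≤ s)
    (hσ₀ : 0 ≤ σ₀) (hσ₀' : σ₀ ≤ 1) (hsγ : 1 / s - σ₀ = 1 / γ)
    (hp : 0 < p) (hπ₀ : 0 ≤ π₀) (hpγ : 1 / p - π₀ = 1 / γ)
    (w v : Ω → ℝ≥0∞) (hw : IsWeight w) (hv : IsWeight v)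
    (f H : Ω → ℝ≥0∞) (hf : Measurable f) (hfne : ∀ x, f x ≠ ∞)
    (hH : ∀ x, H x ^ s * w x ^ s = f x ^ p * v x ^ p) :
    (∀ x, 0 < f x →
      f x * ((H x * w x * (v x)⁻¹) ^ (-(s / γ)) * v x ^ (s * σ₀))
        ≤ (f x * v x) ^ (p * π₀)) ∧
    eNorm (fun x => f x * ((H x * w x * (v x)⁻¹) ^ (-(s / γ)) * v x ^ (s * σ₀)))
        (ENNReal.ofReal π₀)⁻¹ μ
      ≤ (eNorm (fun x => f x * v x) (ENNReal.ofReal p) μ) ^ (p * π₀) :=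
  pointwise_extrapolation_step_general μ γ s σ₀ p π₀ hs hsγ hp hπ₀ hpγ w v hv f H hfne hH
end

section
/- Key pointwise bound in the rapid-decay embedding: under the group assumptions with doubling constant A and base (U_k), define for n ∈ ℕ the step function P(x) := A^{−nk} for x ∈ U_{θ^k(0)} ∖ U_{θ^{k−1}(0)} (k ≥ 1) and P(x) := 1 for x ∈ U_0. Then P(x)^{1/n} ≤ A · M(𝟙_{U_0})(x) for all x ∈ 𝔤, where M is the maximal operator over all translates x + U_k. -/
open MeasureTheory ENNReal Pointwise

/-! If `x ∈ U_{θ^k(0)}`, symmetry and `U_m + U_m ⊆ U_{θ m}` show that the translate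
`x + U_{θ^{k+1}(0)}` contains both `x` and `U_0`, while translation invariance and iterated
doubling bound its measure by `A^{k+1} μ(U_0)`. Averaging `𝟙_{U_0}` over this one basis set gives
`M 𝟙_{U_0}(x) ≥ A^{-(k+1)}`, i.e. `A^{-k} ≤ A · M 𝟙_{U_0}(x)`; the case `k = 0` is the bound on `U_0`. -/

theorem le_maxOp {Ω : Type*} [MeasurableSpace Ω] {μ : Measure Ω} {𝒰 : Set (Set Ω)}
    {f : Ω → ℝ≥0∞} {V : Set Ω} {x : Ω} (hV : V ∈ 𝒰) (hx : x ∈ V) :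
    (μ V)⁻¹ * ∫⁻ y in V, f y ∂μ ≤ maxOp μ 𝒰 f x :=
  le_iSup₂_of_le V hV (by rw [Set.indicator_of_mem hx, mul_one])

theorem inv_measure_mul_measure_le_maxOp_indicator {Ω : Type*} [MeasurableSpace Ω]
    {μ : Measure Ω} {𝒰 : Set (Set Ω)} {S V : Set Ω} {x : Ω} (hS : MeasurableSet S)
    (hSV : S ⊆ V) (hV : V ∈ 𝒰) (hx : x ∈ V) :
    (μ V)⁻¹ * μ S ≤ maxOp μ 𝒰 (S.indicator fun _ => 1) x := by
  have hint : ∫⁻ y in V, S.indicator (fun _ => (1 : ℝ≥0∞)) y ∂μ = μ S := by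
    rw [lintegral_indicator_const hS, Measure.restrict_apply hS,
      Set.inter_eq_self_of_subset_left hSV, one_mul]
  simpa only [hint] using le_maxOp (μ := μ) (f := S.indicator fun _ => 1) hV hx

theorem Set.subset_vadd_of_neg_mem {G : Type*} [AddGroup G] {W T : Set G} {x : G}
    (hx : -x ∈ W) (hWT : W + W ⊆ T) : W ⊆ x +ᵥ T := by
  intro y hy
  rw [Set.mem_vadd_set_iff_neg_vadd_mem]
  exact hWT (Set.add_mem_add hx hy)

theorem measure_iterate_le_pow_mul {α ι : Type*} [MeasurableSpace α] (μ : Measure α)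
    (U : ι → Set α) (θ : ι → ι) (A : ℝ≥0∞) (h : ∀ i, μ (U (θ i)) ≤ A * μ (U i)) (j : ℕ)
    (i : ι) : μ (U (θ^[j] i)) ≤ A ^ j * μ (U i) := by
  induction j with
  | zero => simp
  | succ j ih =>
    calc μ (U (θ^[j + 1] i)) ≤ A * μ (U (θ^[j] i)) := by
          rw [Function.iterate_succ_apply']; exact h _
      _ ≤ A * (A ^ j * μ (U i)) := by gcongr
      _ = A ^ (j + 1) * μ (U i) := by rw [pow_succ', mul_assoc]

theorem ENNReal.inv_pow_eq_mul_inv_pow_succ {A : ℝ≥0∞} (h₀ : A ≠ 0) (h : A ≠ ∞) (k : ℕ) :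
    (A ^ k)⁻¹ = A * (A ^ (k + 1))⁻¹ := by
  rw [pow_succ', ENNReal.mul_inv (Or.inl h₀) (Or.inl h), ← mul_assoc,
    ENNReal.mul_inv_cancel h₀ h, one_mul]

theorem ENNReal.rpow_neg_mul_rpow_inv (a : ℝ≥0∞) {n : ℝ} (hn : n ≠ 0) (k : ℝ) :
    (a ^ (-(n * k))) ^ n⁻¹ = a ^ (-k) := by
  rw [← ENNReal.rpow_mul]
  congr 1
  field_simp

theorem inv_pow_le_mul_maxOp_indicator_of_mem_iterate {G ι : Type*} [AddGroup G]
    [MeasurableSpace G] [Preorder ι] (μ : Measure G) [μ.IsAddLeftInvariant] {U : ι → Set G}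
    {θ : ι → ι} {A : ℝ≥0∞} {i₀ : ι} (hU₀ : MeasurableSet (U i₀)) (hU₀pos : μ (U i₀) ≠ 0)
    (hU₀fin : μ (U i₀) ≠ ∞) (hUsymm : ∀ i, U i = -U i) (hUmono : Monotone U) (hθ : id ≤ θ)
    (hθdouble : ∀ i, U i + U i ⊆ U (θ i)) (hA₀ : A ≠ 0) (hA : A ≠ ∞)
    (hdouble : ∀ i, μ (U (θ i)) ≤ A * μ (U i)) {k : ℕ} {x : G} (hx : x ∈ U (θ^[k] i₀)) :
    (A ^ k)⁻¹ ≤ A * maxOp μ {V | ∃ (y : G) (i : ι), V = y +ᵥ U i}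
      ((U i₀).indicator fun _ => 1) x := by
  set m := θ^[k] i₀
  have hneg : -x ∈ U m := Set.mem_neg.1 (hUsymm m ▸ hx)
  have hsub : U m ⊆ x +ᵥ U (θ m) := Set.subset_vadd_of_neg_mem hneg (hθdouble m)
  have hU₀m : U i₀ ⊆ U m := hUmono (Function.id_le_iterate_of_id_le hθ k i₀)
  have hμV : μ (x +ᵥ U (θ m)) ≤ A ^ (k + 1) * μ (U i₀) := by
    rw [measure_vadd, ← Function.iterate_succ_apply' θ k i₀]
    exact measure_iterate_le_pow_mul μ U θ A hdouble (k + 1) i₀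
  calc (A ^ k)⁻¹ = A * ((A ^ (k + 1) * μ (U i₀))⁻¹ * μ (U i₀)) := by
        rw [ENNReal.mul_inv (Or.inr hU₀fin) (Or.inr hU₀pos), mul_assoc,
          ENNReal.inv_mul_cancel hU₀pos hU₀fin, mul_one,
          ENNReal.inv_pow_eq_mul_inv_pow_succ hA₀ hA]
    _ ≤ A * ((μ (x +ᵥ U (θ m)))⁻¹ * μ (U i₀)) := by gcongr
    _ ≤ A * maxOp μ {V | ∃ (y : G) (i : ι), V = y +ᵥ U i} ((U i₀).indicator fun _ => 1) x := by
        gcongr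
        exact inv_measure_mul_measure_le_maxOp_indicator hU₀ (hU₀m.trans hsub) ⟨x, θ m, rfl⟩
          (hsub hx)

theorem rapid_decay_pointwise_bound_general {G : Type*} [AddCommGroup G] [TopologicalSpace G]
    [MeasurableSpace G]
    (μ : Measure G) [μ.IsAddHaarMeasure]
    (U : ℤ → Set G) (A : ℝ≥0∞) (θ : ℤ → ℤ)
    (hUmeas : ∀ k, MeasurableSet (U k)) (hUsymm : ∀ k, U k = -U k)
    (hUnbhd : ∀ k, U k ∈ nhds (0 : G)) (hUcpt : ∀ k, IsCompact (closure (U k)))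
    (hUmono : ∀ k m : ℤ, k ≤ m → U k ⊆ U m)
    (hθ : ∀ k, k < θ k)
    (hθdouble : ∀ k, U k + U k ⊆ U (θ k))
    (hA : 1 ≤ A) (hA' : A ≠ ∞)
    (hdouble : ∀ (k : ℤ) (x : G), μ (x +ᵥ U (θ k)) ≤ A * μ (x +ᵥ U k))
    (n : ℕ) (hn : 1 ≤ n) :
    (∀ x ∈ U 0, (1 : ℝ≥0∞)
      ≤ A * maxOp μ {V : Set G | ∃ (y : G) (k : ℤ), V = y +ᵥ U k}
          (Set.indicator (U 0) fun _ => (1 : ℝ≥0∞)) x) ∧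
    (∀ k : ℕ, 1 ≤ k → ∀ x ∈ U (θ^[k] 0) \ U (θ^[k - 1] 0),
      (A ^ (-((n : ℝ) * k))) ^ (n : ℝ)⁻¹
        ≤ A * maxOp μ {V : Set G | ∃ (y : G) (k : ℤ), V = y +ᵥ U k}
            (Set.indicator (U 0) fun _ => (1 : ℝ≥0∞)) x) := by
  have key : ∀ (k : ℕ), ∀ x ∈ U (θ^[k] 0), (A ^ k)⁻¹ ≤ A * maxOp μ
      {V : Set G | ∃ (y : G) (k : ℤ), V = y +ᵥ U k} ((U 0).indicator fun _ => 1) x :=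
    fun k x hx => inv_pow_le_mul_maxOp_indicator_of_mem_iterate μ (hUmeas 0)
      (μ.measure_pos_of_mem_nhds (hUnbhd 0)).ne'
      (measure_ne_top_of_subset subset_closure (hUcpt 0).measure_ne_top) hUsymm hUmono
      (fun k => (hθ k).le) hθdouble (zero_lt_one.trans_le hA).ne' hA'
      (fun k => by simpa using hdouble k 0) hx
  refine ⟨fun x hx => by simpa using key 0 x hx, fun k _ x hx => ?_⟩
  rw [ENNReal.rpow_neg_mul_rpow_inv A (by positivity), ENNReal.rpow_neg, ENNReal.rpow_natCast]
  exact key k x hx.1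

/-- key pointwise bound in the rapid-decay embedding:
with `P(x) := A^{-nk}` on the annulus `U_{θ^k(0)} ∖ U_{θ^{k-1}(0)}` (k ≥ 1) and
`P(x) := 1` on `U₀`, one has `P(x)^{1/n} ≤ A · M(𝟙_{U₀})(x)` for all `x ∈ 𝔤`,
where `M` is the maximal operator over the basis of all translates `x + U_k`. -/
theorem rapid_decay_pointwise_bound {G : Type*} [AddCommGroup G] [TopologicalSpace G]
    [IsTopologicalAddGroup G] [MeasurableSpace G] [BorelSpace G]
    (μ : Measure G) [μ.IsAddHaarMeasure]
    (U : ℤ → Set G) (A : ℝ≥0∞) (θ : ℤ → ℤ)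
    (hUmeas : ∀ k, MeasurableSet (U k)) (hUsymm : ∀ k, U k = -U k)
    (hUnbhd : ∀ k, U k ∈ nhds (0 : G)) (hUcpt : ∀ k, IsCompact (closure (U k)))
    (hUmono : ∀ k m : ℤ, k ≤ m → U k ⊆ U m) (hUcover : (⋃ k, U k) = Set.univ)
    (hθmono : Monotone θ) (hθ : ∀ k, k < θ k)
    (hθdouble : ∀ k, U k + U k ⊆ U (θ k))
    (hA : 1 ≤ A) (hA' : A ≠ ∞)
    (hdouble : ∀ (k : ℤ) (x : G), μ (x +ᵥ U (θ k)) ≤ A * μ (x +ᵥ U k))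
    (n : ℕ) (hn : 1 ≤ n) :
    (∀ x ∈ U 0, (1 : ℝ≥0∞)
      ≤ A * maxOp μ {V : Set G | ∃ (y : G) (k : ℤ), V = y +ᵥ U k}
          (Set.indicator (U 0) fun _ => (1 : ℝ≥0∞)) x) ∧
    (∀ k : ℕ, 1 ≤ k → ∀ x ∈ U (θ^[k] 0) \ U (θ^[k - 1] 0),
      (A ^ (-((n : ℝ) * k))) ^ (n : ℝ)⁻¹
        ≤ A * maxOp μ {V : Set G | ∃ (y : G) (k : ℤ), V = y +ᵥ U k}
            (Set.indicator (U 0) fun _ => (1 : ℝ≥0∞)) x) :=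
  rapid_decay_pointwise_bound_general μ U A θ hUmeas hUsymm hUnbhd hUcpt hUmono hθ hθdouble hA hA'
    hdouble n hn
end
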